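/- The degeneracy is continuous with respect to the cut metric: |δ(w) − δ(w')| ≤ 2√(δ_□(w,w')), where δ_□(w,w') = inf_σ d_□(w^σ, w') with infimum over measure-preserving maps σ. -/

import Mathlib

open MeasureTheory Set Filter Topology

/-- A graphon: symmetric measurable `w : [0,1]² → [0,1]` (stated on all of ℝ²). -/
def Graphon (w : ℝ → ℝ → ℝ) : Prop :=
  Measurable (Function.uncurry w) ∧ (∀ x y, w x y = w y x) ∧
    ∀ x y, w x y ∈ Set.Icc (0 : ℝ) 1

/-- Degree of `x` restricted to `K`: `d_w^K(x) = ∫_K w(x,y) dy`. -/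
noncomputable def degK (w : ℝ → ℝ → ℝ) (K : Set ℝ) (x : ℝ) : ℝ := ∫ y in K, w x y

/-- Iterated peeling sets: `coreIter w κ n = K^{n+1}_κ(w)` (so index 0 is `K¹`). -/
noncomputable def coreIter (w : ℝ → ℝ → ℝ) (κ : ℝ) : ℕ → Set ℝ
  | 0 => {x ∈ Set.Icc (0 : ℝ) 1 | κ ≤ degK w (Set.Icc 0 1) x}
  | n + 1 => {x ∈ coreIter w κ n | κ ≤ degK w (coreIter w κ n) x}

/-- The κ-core `K_κ(w) = ⋂ₙ K^n_κ(w)`. -/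
noncomputable def core (w : ℝ → ℝ → ℝ) (κ : ℝ) : Set ℝ := ⋂ n, coreIter w κ n

/-- Shell index `δ_x(w) = sup {κ : x ∈ K_κ(w)}`. -/
noncomputable def shell (w : ℝ → ℝ → ℝ) (x : ℝ) : ℝ := sSup {κ | x ∈ core w κ}

/-- Degeneracy `δ(w) = sup {κ : |K_κ(w)| > 0}`. -/
noncomputable def degen (w : ℝ → ℝ → ℝ) : ℝ := sSup {κ | 0 < volume (core w κ)}

/-- Cut-norm distance `d_□`. -/
noncomputable def cutDist (w w' : ℝ → ℝ → ℝ) : ℝ :=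
  sSup {r | ∃ S T : Set ℝ, MeasurableSet S ∧ MeasurableSet T ∧
    S ⊆ Set.Icc 0 1 ∧ T ⊆ Set.Icc 0 1 ∧
    r = |∫ x in S, ∫ y in T, (w x y - w' x y)|}

/-- A measure-preserving map of `[0,1]`. -/
def MPMap (σ : ℝ → ℝ) : Prop :=
  Measurable σ ∧ Set.MapsTo σ (Set.Icc 0 1) (Set.Icc 0 1) ∧
    ∀ A : Set ℝ, MeasurableSet A → A ⊆ Set.Icc 0 1 →
      volume (σ ⁻¹' A ∩ Set.Icc 0 1) = volume A

/-- Cut metric `δ_□(w,w') = inf_σ d_□(w^σ, w')`. -/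
noncomputable def cutMetric (w w' : ℝ → ℝ → ℝ) : ℝ :=
  sInf {r | ∃ σ : ℝ → ℝ, MPMap σ ∧ r = cutDist (fun x y => w (σ x) (σ y)) w'}

section Basics
variable {w : ℝ → ℝ → ℝ} (hw : Graphon w)

lemma gr_meas_sec (hw : Graphon w) (x : ℝ) : Measurable (w x) :=
  hw.1.of_uncurry_left

lemma gr_intOn (hw : Graphon w) (x : ℝ) {K : Set ℝ} (hK : volume K ≠ ⊤) :
    IntegrableOn (w x) K := by
  refine Integrable.mono' (g := fun _ => (1:ℝ)) ?_ (gr_meas_sec hw x).aestronglyMeasurable ?_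
  · exact (integrable_const_iff).2 (Or.inr (by constructor; rwa [Measure.restrict_apply_univ, lt_top_iff_ne_top]))
  · filter_upwards with y
    rw [Real.norm_eq_abs, abs_le]
    exact ⟨by linarith [(hw.2.2 x y).1], (hw.2.2 x y).2⟩

lemma volume_ne_top_of_sub {K : Set ℝ} (hK : K ⊆ Set.Icc 0 1) : volume K ≠ ⊤ := by
  refine ne_top_of_le_ne_top ?_ (measure_mono hK)
  simp [Real.volume_Icc]

lemma degK_nonneg (hw : Graphon w) (K : Set ℝ) (x : ℝ) : 0 ≤ degK w K x :=
  integral_nonneg fun y => (hw.2.2 x y).1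

lemma degK_le_measure (hw : Graphon w) {K : Set ℝ} (hK : volume K ≠ ⊤) (x : ℝ) :
    degK w K x ≤ (volume K).toReal := by
  have : degK w K x ≤ ∫ _ in K, (1:ℝ) := by
    refine integral_mono_of_nonneg ?_ ?_ ?_
    · filter_upwards with y using (hw.2.2 x y).1
    · exact (integrable_const_iff).2 (Or.inr (by constructor; rwa [Measure.restrict_apply_univ, lt_top_iff_ne_top]))
    · filter_upwards with y using (hw.2.2 x y).2
  simpa [measureReal_def] using this

lemma degK_mono_set (hw : Graphon w) {K₁ K₂ : Set ℝ} (h12 : K₁ ⊆ K₂)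
    (hK : volume K₂ ≠ ⊤) (x : ℝ) : degK w K₁ x ≤ degK w K₂ x := by
  refine setIntegral_mono_set (gr_intOn hw x hK) ?_ (HasSubset.Subset.eventuallyLE h12)
  filter_upwards with y using (hw.2.2 x y).1

lemma degK_measurable (hw : Graphon w) (K : Set ℝ) : Measurable (degK w K) := by
  have : StronglyMeasurable fun x => ∫ y, (Function.uncurry w) (x, y) ∂(volume.restrict K) :=
    hw.1.stronglyMeasurable.integral_prod_right'
  exact this.measurable

end Basics

section CoreBasics
variable {w : ℝ → ℝ → ℝ} {κ : ℝ}

lemma coreIter_subset_Icc (w : ℝ → ℝ → ℝ) (κ : ℝ) :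
    ∀ n, coreIter w κ n ⊆ Set.Icc 0 1
  | 0 => fun x hx => hx.1
  | n + 1 => fun x hx => coreIter_subset_Icc w κ n hx.1

lemma coreIter_succ_subset (w : ℝ → ℝ → ℝ) (κ : ℝ) (n : ℕ) :
    coreIter w κ (n + 1) ⊆ coreIter w κ n := fun x hx => hx.1

lemma coreIter_antitone (w : ℝ → ℝ → ℝ) (κ : ℝ) : Antitone (coreIter w κ) :=
  antitone_nat_of_succ_le (coreIter_succ_subset w κ)

lemma coreIter_vol_ne_top (w : ℝ → ℝ → ℝ) (κ : ℝ) (n : ℕ) :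
    volume (coreIter w κ n) ≠ ⊤ :=
  volume_ne_top_of_sub (coreIter_subset_Icc w κ n)

lemma coreIter_measurable (hw : Graphon w) : ∀ n, MeasurableSet (coreIter w κ n)
  | 0 => measurableSet_Icc.inter ((degK_measurable hw _) measurableSet_Ici)
  | n + 1 => ((coreIter_measurable hw n).inter
      ((degK_measurable hw _) measurableSet_Ici))

lemma core_measurable (hw : Graphon w) : MeasurableSet (core w κ) :=
  MeasurableSet.iInter fun n => coreIter_measurable hw n

lemma core_subset_Icc (w : ℝ → ℝ → ℝ) (κ : ℝ) : core w κ ⊆ Set.Icc 0 1 :=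
  (Set.iInter_subset _ 0).trans (coreIter_subset_Icc w κ 0)

lemma core_subset_coreIter (w : ℝ → ℝ → ℝ) (κ : ℝ) (n : ℕ) :
    core w κ ⊆ coreIter w κ n := Set.iInter_subset _ n

lemma tendsto_vol_coreIter (hw : Graphon w) :
    Tendsto (fun n => volume (coreIter w κ n)) atTop (𝓝 (volume (core w κ))) :=
  tendsto_measure_iInter_atTop (fun n => (coreIter_measurable hw n).nullMeasurableSet)
    (coreIter_antitone w κ) ⟨0, coreIter_vol_ne_top w κ 0⟩

/-- If `x ∈ core w κ` then its degree in the core itself is at least κ. -/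
lemma le_degK_core (hw : Graphon w) {x : ℝ} (hx : x ∈ core w κ) :
    κ ≤ degK w (core w κ) x := by
  have key : ∀ n, κ ≤ degK w (core w κ) x + (volume (coreIter w κ n \ core w κ)).toReal := by
    intro n
    have h1 : κ ≤ degK w (coreIter w κ n) x := (core_subset_coreIter w κ (n+1) hx).2
    have hsplit : degK w (core w κ) x + degK w (coreIter w κ n \ core w κ) x
        = degK w (coreIter w κ n) x := by
      have := integral_inter_add_diff (μ := volume) (s := coreIter w κ n) (t := core w κ)
        (f := w x) (core_measurable hw) (gr_intOn hw x (coreIter_vol_ne_top w κ n))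
      rw [Set.inter_eq_self_of_subset_right (core_subset_coreIter w κ n)] at this
      exact this
    have h2 : degK w (coreIter w κ n \ core w κ) x
        ≤ (volume (coreIter w κ n \ core w κ)).toReal :=
      degK_le_measure hw (ne_top_of_le_ne_top (coreIter_vol_ne_top w κ n)
        (measure_mono Set.diff_subset)) x
    linarith [h1, hsplit, h2]
  have hto : Tendsto (fun n => (volume (coreIter w κ n \ core w κ)).toReal) atTop (𝓝 0) := by
    have hdiff : ∀ n, volume (coreIter w κ n \ core w κ)
        = volume (coreIter w κ n) - volume (core w κ) := fun n =>
      measure_diff (core_subset_coreIter w κ n) (core_measurable hw).nullMeasurableSet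
        (volume_ne_top_of_sub (core_subset_Icc w κ))
    simp only [hdiff]
    have h1 : Tendsto (fun n => (volume (coreIter w κ n)).toReal) atTop
        (𝓝 ((volume (core w κ)).toReal)) :=
      (ENNReal.tendsto_toReal (volume_ne_top_of_sub (core_subset_Icc w κ))).comp
        (tendsto_vol_coreIter hw)
    have h2 : ∀ n, ((volume (coreIter w κ n) - volume (core w κ))).toReal
        = (volume (coreIter w κ n)).toReal - (volume (core w κ)).toReal := fun n =>
      ENNReal.toReal_sub_of_le (measure_mono (core_subset_coreIter w κ n))
        (coreIter_vol_ne_top w κ n)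
    simp only [h2]
    have := h1.sub (tendsto_const_nhds (x := (volume (core w κ)).toReal))
    simpa using this
  have : Tendsto (fun n => degK w (core w κ) x + (volume (coreIter w κ n \ core w κ)).toReal)
      atTop (𝓝 (degK w (core w κ) x)) := by
    simpa using (tendsto_const_nhds (x := degK w (core w κ) x)).add hto
  exact ge_of_tendsto' this key

end CoreBasics

section DegenBasics
variable {w : ℝ → ℝ → ℝ} {κ : ℝ}

lemma coreIter_eq_Icc (hw : Graphon w) (hκ : κ ≤ 0) :
    ∀ n, coreIter w κ n = Set.Icc 0 1
  | 0 => by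
    ext x
    simp only [coreIter, Set.mem_setOf_eq, Set.mem_sep_iff]
    exact ⟨fun h => h.1, fun h => ⟨h, hκ.trans (degK_nonneg hw _ x)⟩⟩
  | n + 1 => by
    ext x
    simp only [coreIter, Set.mem_setOf_eq, Set.mem_sep_iff, coreIter_eq_Icc hw hκ n]
    exact ⟨fun h => h.1, fun h => ⟨h, hκ.trans (degK_nonneg hw _ x)⟩⟩

lemma degen_bddAbove (hw : Graphon w) : BddAbove {κ | 0 < volume (core w κ)} := by
  refine ⟨1, fun κ hκ => ?_⟩
  obtain ⟨x, hx⟩ := nonempty_of_measure_ne_zero (ne_of_gt hκ)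
  have h0 : x ∈ coreIter w κ 0 := core_subset_coreIter w κ 0 hx
  have := h0.2
  calc κ ≤ degK w (Set.Icc 0 1) x := this
    _ ≤ (volume (Set.Icc (0:ℝ) 1)).toReal := degK_le_measure hw (by simp [Real.volume_Icc]) x
    _ = 1 := by simp [Real.volume_Icc]

lemma zero_mem_degen_set (hw : Graphon w) : (0:ℝ) ∈ {κ | 0 < volume (core w κ)} := by
  have : core w 0 = Set.Icc 0 1 := by
    simp only [core, coreIter_eq_Icc hw le_rfl, Set.iInter_const]
  simp [this, Real.volume_Icc]

lemma degen_nonneg (hw : Graphon w) : 0 ≤ degen w :=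
  le_csSup (degen_bddAbove hw) (zero_mem_degen_set hw)

lemma ofReal_le_vol_core (hw : Graphon w) (hpos : 0 < volume (core w κ)) :
    ENNReal.ofReal κ ≤ volume (core w κ) := by
  obtain ⟨x, hx⟩ := nonempty_of_measure_ne_zero (ne_of_gt hpos)
  refine ge_of_tendsto' (tendsto_vol_coreIter hw) fun n => ?_
  have h1 : κ ≤ degK w (coreIter w κ n) x := (core_subset_coreIter w κ (n+1) hx).2
  have h2 : degK w (coreIter w κ n) x ≤ (volume (coreIter w κ n)).toReal :=
    degK_le_measure hw (coreIter_vol_ne_top w κ n) x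
  exact ENNReal.ofReal_le_of_le_toReal (h1.trans h2)

/-- Peeling: a point of `[0,1]` outside `K'_n` has degree `< κ` into `K'_n`. -/
lemma degK_lt_of_not_mem (hw : Graphon w) :
    ∀ n, ∀ x ∈ Set.Icc (0:ℝ) 1, x ∉ coreIter w κ n →
      degK w (coreIter w κ n) x < κ
  | 0 => by
    intro x hx hnx
    have h : ¬ κ ≤ degK w (Set.Icc 0 1) x := fun h => hnx ⟨hx, h⟩
    calc degK w (coreIter w κ 0) x ≤ degK w (Set.Icc 0 1) x :=
          degK_mono_set hw (coreIter_subset_Icc w κ 0) (by simp [Real.volume_Icc]) x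
      _ < κ := lt_of_not_ge h
  | n + 1 => by
    intro x hx hnx
    by_cases hmem : x ∈ coreIter w κ n
    · have h : ¬ κ ≤ degK w (coreIter w κ n) x := fun h => hnx ⟨hmem, h⟩
      calc degK w (coreIter w κ (n+1)) x ≤ degK w (coreIter w κ n) x :=
            degK_mono_set hw (coreIter_succ_subset w κ n) (coreIter_vol_ne_top w κ n) x
        _ < κ := lt_of_not_ge h
    · calc degK w (coreIter w κ (n+1)) x ≤ degK w (coreIter w κ n) x :=
            degK_mono_set hw (coreIter_succ_subset w κ n) (coreIter_vol_ne_top w κ n) x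
        _ < κ := degK_lt_of_not_mem hw n x hx hmem

end DegenBasics

section CutDist
variable {u v : ℝ → ℝ → ℝ}

lemma inner_eq (hu : Graphon u) (hv : Graphon v) {T : Set ℝ} (hT : volume T ≠ ⊤) (x : ℝ) :
    ∫ y in T, (u x y - v x y) = degK u T x - degK v T x :=
  integral_sub (gr_intOn hu x hT) (gr_intOn hv x hT)

lemma inner_abs_le (hu : Graphon u) (hv : Graphon v) {T : Set ℝ} (hT : T ⊆ Set.Icc 0 1)
    (x : ℝ) : |∫ y in T, (u x y - v x y)| ≤ 1 := by
  rw [inner_eq hu hv (volume_ne_top_of_sub hT) x, abs_sub_le_iff]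
  have h1 := degK_nonneg hu T x
  have h2 := degK_nonneg hv T x
  have h3 := degK_le_measure hu (volume_ne_top_of_sub hT) x
  have h4 := degK_le_measure hv (volume_ne_top_of_sub hT) x
  have h5 : (volume T).toReal ≤ 1 := by
    have := measure_mono hT (μ := volume)
    rw [Real.volume_Icc] at this
    simpa using ENNReal.toReal_mono (by simp) this
  constructor <;> linarith

lemma cutSet_le_one (hu : Graphon u) (hv : Graphon v) :
    ∀ r ∈ {r | ∃ S T : Set ℝ, MeasurableSet S ∧ MeasurableSet T ∧
      S ⊆ Set.Icc 0 1 ∧ T ⊆ Set.Icc 0 1 ∧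
      r = |∫ x in S, ∫ y in T, (u x y - v x y)|}, r ≤ 1 := by
  rintro r ⟨S, T, hS, hT, hSi, hTi, rfl⟩
  have hb : ∀ x ∈ S, ‖∫ y in T, (u x y - v x y)‖ ≤ 1 := fun x _ =>
    inner_abs_le hu hv hTi x
  have := norm_setIntegral_le_of_norm_le_const (μ := volume)
    (lt_top_iff_ne_top.2 (volume_ne_top_of_sub hSi)) hb
  rw [Real.norm_eq_abs, measureReal_def] at this
  refine this.trans ?_
  have h5 : (volume S).toReal ≤ 1 := by
    have := measure_mono hSi (μ := volume)
    rw [Real.volume_Icc] at this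
    simpa using ENNReal.toReal_mono (by simp) this
  linarith

lemma cutDist_bddAbove (hu : Graphon u) (hv : Graphon v) :
    BddAbove {r | ∃ S T : Set ℝ, MeasurableSet S ∧ MeasurableSet T ∧
      S ⊆ Set.Icc 0 1 ∧ T ⊆ Set.Icc 0 1 ∧
      r = |∫ x in S, ∫ y in T, (u x y - v x y)|} :=
  ⟨1, cutSet_le_one hu hv⟩

lemma cutDist_nonneg (hu : Graphon u) (hv : Graphon v) : 0 ≤ cutDist u v := by
  refine le_csSup (cutDist_bddAbove hu hv) ⟨∅, ∅, MeasurableSet.empty, MeasurableSet.empty,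
    Set.empty_subset _, Set.empty_subset _, by simp⟩

lemma le_cutDist (hu : Graphon u) (hv : Graphon v) {S T : Set ℝ}
    (hS : MeasurableSet S) (hT : MeasurableSet T)
    (hSi : S ⊆ Set.Icc 0 1) (hTi : T ⊆ Set.Icc 0 1) :
    ∫ x in S, ∫ y in T, (u x y - v x y) ≤ cutDist u v :=
  (le_abs_self _).trans (le_csSup (cutDist_bddAbove hu hv) ⟨S, T, hS, hT, hSi, hTi, rfl⟩)

lemma cutDist_symm (u v : ℝ → ℝ → ℝ) : cutDist u v = cutDist v u := by
  unfold cutDist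
  congr 1
  ext r
  have key : ∀ (S T : Set ℝ), |∫ x in S, ∫ y in T, (u x y - v x y)|
      = |∫ x in S, ∫ y in T, (v x y - u x y)| := by
    intro S T
    have : ∀ x, ∫ y in T, (v x y - u x y) = - ∫ y in T, (u x y - v x y) := by
      intro x
      rw [← integral_neg]
      congr 1 with y
      ring
    simp only [this, integral_neg, abs_neg]
  constructor
  · rintro ⟨S, T, hS, hT, hSi, hTi, rfl⟩
    exact ⟨S, T, hS, hT, hSi, hTi, key S T⟩
  · rintro ⟨S, T, hS, hT, hSi, hTi, rfl⟩
    exact ⟨S, T, hS, hT, hSi, hTi, (key S T).symm⟩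

end CutDist

section MainLemma
variable {u v : ℝ → ℝ → ℝ} {κ : ℝ}

lemma degK_lt_prev {w : ℝ → ℝ → ℝ} (hw : Graphon w) {n : ℕ} {x : ℝ}
    (hx : x ∈ Set.Icc (0:ℝ) 1) (hnx : x ∉ coreIter w κ (n+1)) :
    degK w (coreIter w κ n) x < κ := by
  by_cases hmem : x ∈ coreIter w κ n
  · exact lt_of_not_ge fun h => hnx ⟨hmem, h⟩
  · exact degK_lt_of_not_mem hw n x hx hmem

lemma degK_Icc_lt {w : ℝ → ℝ → ℝ} {x : ℝ} (hx : x ∈ Set.Icc (0:ℝ) 1)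
    (hnx : x ∉ coreIter w κ 0) : degK w (Set.Icc 0 1) x < κ :=
  lt_of_not_ge fun h => hnx ⟨hx, h⟩

lemma innerfn_integrableOn (hu : Graphon u) (hv : Graphon v) {S T : Set ℝ}
    (hS : volume S ≠ ⊤) (hT : T ⊆ Set.Icc 0 1) :
    IntegrableOn (fun x => ∫ y in T, (u x y - v x y)) S volume := by
  have heq : (fun x => ∫ y in T, (u x y - v x y))
      = fun x => degK u T x - degK v T x :=
    funext (inner_eq hu hv (volume_ne_top_of_sub hT))
  refine Integrable.mono' (g := fun _ => (1:ℝ)) ?_ ?_ ?_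
  · exact (integrable_const_iff).2 (Or.inr (by
      constructor; rwa [Measure.restrict_apply_univ, lt_top_iff_ne_top]))
  · rw [heq]
    exact ((degK_measurable hu T).sub (degK_measurable hv T)).aestronglyMeasurable
  · filter_upwards with x
    rw [Real.norm_eq_abs]
    exact inner_abs_le hu hv hT x

lemma step_bound {ε c a : ℝ} (hε : 0 ≤ ε) (hc : Real.sqrt ε < c) (ha : 0 ≤ a)
    (h : c * a ≤ ε) : a ≤ Real.sqrt ε := by
  by_contra hcon
  push_neg at hcon
  nlinarith [Real.sq_sqrt hε, Real.sqrt_nonneg ε]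

lemma degen_sub_le (hu : Graphon u) (hv : Graphon v) :
    degen u - 2 * Real.sqrt (cutDist u v) ≤ degen v := by
  set ε := cutDist u v with hεdef
  have hε0 : 0 ≤ ε := cutDist_nonneg hu hv
  have hsqrt0 : 0 ≤ Real.sqrt ε := Real.sqrt_nonneg ε
  -- main claim
  have main : ∀ κ' : ℝ, 0 ≤ κ' → κ' + 2 * Real.sqrt ε < degen u → κ' ≤ degen v := by
    intro κ' hκ'0 hlt
    obtain ⟨κ, hκS, hκgt⟩ := exists_lt_of_lt_csSup ⟨0, zero_mem_degen_set hu⟩ hlt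
    have hκgap : κ' + 2 * Real.sqrt ε < κ := hκgt
    set K : Set ℝ := core u κ with hKdef
    have hKpos : 0 < volume K := hκS
    have hKmeas : MeasurableSet K := core_measurable hu
    have hKIcc : K ⊆ Set.Icc 0 1 := core_subset_Icc u κ
    have hKne : volume K ≠ ⊤ := volume_ne_top_of_sub hKIcc
    set K' : ℕ → Set ℝ := coreIter v κ' with hK'def
    set A : ℕ → Set ℝ := fun n => K \ K' n with hAdef
    have hAmeas : ∀ n, MeasurableSet (A n) :=
      fun n => hKmeas.diff (coreIter_measurable hv n)
    have hAIcc : ∀ n, A n ⊆ Set.Icc 0 1 := fun n => Set.diff_subset.trans hKIcc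
    have hAne : ∀ n, volume (A n) ≠ ⊤ := fun n => volume_ne_top_of_sub (hAIcc n)
    set a : ℕ → ℝ := fun n => (volume (A n)).toReal with hadef
    have ha0 : ∀ n, 0 ≤ a n := fun n => ENNReal.toReal_nonneg
    -- base inequality
    have base : (κ - κ') * a 0 ≤ ε := by
      have hpt : ∀ x ∈ A 0, (κ - κ') ≤ ∫ y in K, (u x y - v x y) := by
        intro x hx
        rw [inner_eq hu hv hKne x]
        have h1 : κ ≤ degK u K x := le_degK_core hu hx.1
        have h2 : degK v K x ≤ degK v (Set.Icc 0 1) x :=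
          degK_mono_set hv hKIcc (by simp [Real.volume_Icc]) x
        have h3 : degK v (Set.Icc 0 1) x < κ' := degK_Icc_lt (hKIcc hx.1) hx.2
        linarith
      have hge := setIntegral_ge_of_const_le (hAmeas 0) (hAne 0) hpt
        (innerfn_integrableOn hu hv (hAne 0) hKIcc)
      have hle := le_cutDist hu hv (hAmeas 0) hKmeas (hAIcc 0) hKIcc
      calc (κ - κ') * a 0 ≤ ∫ x in A 0, ∫ y in K, (u x y - v x y) := by rw [smul_eq_mul, mul_comm] at hge; exact hge
        _ ≤ ε := hle
    -- step inequality
    have step : ∀ n, (κ - κ' - a n) * a (n+1) ≤ ε := by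
      intro n
      set T : Set ℝ := K ∩ K' n with hTdef
      have hTmeas : MeasurableSet T := hKmeas.inter (coreIter_measurable hv n)
      have hTIcc : T ⊆ Set.Icc 0 1 := Set.inter_subset_left.trans hKIcc
      have hTne : volume T ≠ ⊤ := volume_ne_top_of_sub hTIcc
      have hpt : ∀ x ∈ A (n+1), (κ - a n - κ') ≤ ∫ y in T, (u x y - v x y) := by
        intro x hx
        rw [inner_eq hu hv hTne x]
        have h1 : κ ≤ degK u K x := le_degK_core hu hx.1
        have hsplit : degK u (K ∩ K' n) x + degK u (K \ K' n) x = degK u K x :=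
          integral_inter_add_diff (coreIter_measurable hv n) (gr_intOn hu x hKne)
        have h2 : degK u (K \ K' n) x ≤ a n :=
          degK_le_measure hu (hAne n) x
        have h3 : degK v T x ≤ degK v (K' n) x :=
          degK_mono_set hv Set.inter_subset_right (coreIter_vol_ne_top v κ' n) x
        have h4 : degK v (K' n) x < κ' := degK_lt_prev hv (hKIcc hx.1) hx.2
        have : κ - a n ≤ degK u T x := by
          have : degK u T x = degK u K x - degK u (K \ K' n) x := by
            rw [← hsplit]; ring
          rw [this]; linarith
        linarith
      have hge := setIntegral_ge_of_const_le (hAmeas (n+1)) (hAne (n+1)) hpt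
        (innerfn_integrableOn hu hv (hAne (n+1)) hTIcc)
      have hle := le_cutDist hu hv (hAmeas (n+1)) hTmeas (hAIcc (n+1)) hTIcc
      calc (κ - κ' - a n) * a (n+1)
          = (κ - a n - κ') * a (n+1) := by ring
        _ ≤ ∫ x in A (n+1), ∫ y in T, (u x y - v x y) := by rw [smul_eq_mul, mul_comm] at hge; exact hge
        _ ≤ ε := hle
    -- inductive bound a n ≤ √ε
    have hbound : ∀ n, a n ≤ Real.sqrt ε := by
      intro n
      induction n with
      | zero =>
        refine step_bound hε0 ?_ (ha0 0) base
        linarith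
      | succ n ih =>
        refine step_bound hε0 ?_ (ha0 (n+1)) (step n)
        linarith
    -- measure of the removed set
    have hrem : volume (K \ core v κ') ≤ ENNReal.ofReal (Real.sqrt ε) := by
      have hAmono : Monotone A := fun m n hmn =>
        Set.diff_subset_diff_right (coreIter_antitone v κ' hmn)
      have hU : K \ core v κ' = ⋃ n, A n := by
        simp only [hAdef, hK'def, core, Set.diff_iInter]
      rw [hU, hAmono.measure_iUnion]
      refine iSup_le fun n => ?_
      rw [← ENNReal.ofReal_toReal (hAne n)]
      exact ENNReal.ofReal_le_ofReal (hbound n)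
    -- conclude positivity of the core of v
    have hvpos : 0 < volume (core v κ') := by
      by_contra hcon
      push_neg at hcon
      have hzero : volume (K ∩ core v κ') = 0 :=
        le_antisymm (le_trans (measure_mono Set.inter_subset_right) hcon) zero_le
      have hKle : volume K ≤ ENNReal.ofReal (Real.sqrt ε) := by
        calc volume K ≤ volume (K ∩ core v κ') + volume (K \ core v κ') :=
              measure_le_inter_add_diff _ _ _
          _ = volume (K \ core v κ') := by rw [hzero, zero_add]
          _ ≤ ENNReal.ofReal (Real.sqrt ε) := hrem
      have hκle : ENNReal.ofReal κ ≤ ENNReal.ofReal (Real.sqrt ε) :=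
        (ofReal_le_vol_core hu hKpos).trans hKle
      rw [ENNReal.ofReal_le_ofReal_iff hsqrt0] at hκle
      linarith
    exact le_csSup (degen_bddAbove hv) hvpos
  -- wrap up
  by_contra hcon
  push_neg at hcon
  have hv0 : 0 ≤ degen v := degen_nonneg hv
  set κ' : ℝ := (degen v + (degen u - 2 * Real.sqrt ε)) / 2 with hκ'def
  have h1 : degen v < κ' := by
    simp only [hκ'def]
    linarith
  have h2 : κ' + 2 * Real.sqrt ε < degen u := by
    simp only [hκ'def]
    linarith
  have := main κ' (by linarith) h2
  linarith

end MainLemma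

section Invariance
variable {w : ℝ → ℝ → ℝ} {σ : ℝ → ℝ} {κ : ℝ}

lemma map_restrict (hσ : MPMap σ) :
    Measure.map σ (volume.restrict (Set.Icc 0 1)) = volume.restrict (Set.Icc 0 1) := by
  ext A hA
  rw [Measure.map_apply hσ.1 hA, Measure.restrict_apply hA, Measure.restrict_apply (hσ.1 hA)]
  have hset : σ ⁻¹' A ∩ Set.Icc 0 1 = σ ⁻¹' (A ∩ Set.Icc 0 1) ∩ Set.Icc 0 1 := by
    ext y
    simp only [Set.mem_inter_iff, Set.mem_preimage]
    exact ⟨fun h => ⟨⟨h.1, hσ.2.1 h.2⟩, h.2⟩, fun h => ⟨h.1.1, h.2⟩⟩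
  rw [hset, hσ.2.2 _ (hA.inter measurableSet_Icc) Set.inter_subset_right]

lemma graphon_comp (hw : Graphon w) (hσ : MPMap σ) :
    Graphon (fun x y => w (σ x) (σ y)) := by
  refine ⟨?_, fun x y => hw.2.1 _ _, fun x y => hw.2.2 _ _⟩
  exact hw.1.comp ((hσ.1.comp measurable_fst).prodMk (hσ.1.comp measurable_snd))

lemma degK_comp (hw : Graphon w) (hσ : MPMap σ) {K : Set ℝ}
    (hK : MeasurableSet K) (hKI : K ⊆ Set.Icc 0 1) (x : ℝ) :
    degK (fun x y => w (σ x) (σ y)) (σ ⁻¹' K ∩ Set.Icc 0 1) x = degK w K (σ x) := by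
  unfold degK
  have h1 : volume.restrict (σ ⁻¹' K ∩ Set.Icc 0 1)
      = (volume.restrict (Set.Icc 0 1)).restrict (σ ⁻¹' K) := by
    rw [Measure.restrict_restrict (hσ.1 hK)]
  have h2 : volume.restrict K = (volume.restrict (Set.Icc 0 1)).restrict K := by
    rw [Measure.restrict_restrict hK, Set.inter_eq_self_of_subset_left hKI]
  rw [h1, h2]
  calc ∫ y in σ ⁻¹' K, w (σ x) (σ y) ∂(volume.restrict (Set.Icc 0 1))
      = ∫ z in K, w (σ x) z ∂(Measure.map σ (volume.restrict (Set.Icc 0 1))) :=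
        (setIntegral_map hK (gr_meas_sec hw (σ x)).aestronglyMeasurable
          hσ.1.aemeasurable).symm
    _ = ∫ z in K, w (σ x) z ∂(volume.restrict (Set.Icc 0 1)) := by rw [map_restrict hσ]

lemma coreIter_comp (hw : Graphon w) (hσ : MPMap σ) :
    ∀ n, coreIter (fun x y => w (σ x) (σ y)) κ n
      = σ ⁻¹' (coreIter w κ n) ∩ Set.Icc 0 1
  | 0 => by
    have hIcc : σ ⁻¹' (Set.Icc (0:ℝ) 1) ∩ Set.Icc 0 1 = Set.Icc 0 1 := by
      ext y
      simp only [Set.mem_inter_iff, Set.mem_preimage]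
      exact ⟨fun h => h.2, fun h => ⟨hσ.2.1 h, h⟩⟩
    have hdeg : ∀ x, degK (fun x y => w (σ x) (σ y)) (Set.Icc 0 1) x
        = degK w (Set.Icc 0 1) (σ x) := by
      intro x
      conv_lhs => rw [← hIcc]
      exact degK_comp hw hσ measurableSet_Icc (fun z hz => hz) x
    ext x
    simp only [coreIter, Set.mem_setOf_eq, Set.mem_inter_iff, Set.mem_preimage, hdeg]
    constructor
    · rintro ⟨h1, h2⟩
      exact ⟨⟨hσ.2.1 h1, h2⟩, h1⟩
    · rintro ⟨⟨h1, h2⟩, h3⟩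
      exact ⟨h3, h2⟩
  | n + 1 => by
    have ih := coreIter_comp hw hσ n
    have hdeg : ∀ x, degK (fun x y => w (σ x) (σ y)) (coreIter (fun x y => w (σ x) (σ y)) κ n) x
        = degK w (coreIter w κ n) (σ x) := by
      intro x
      rw [ih]
      exact degK_comp hw hσ (coreIter_measurable hw n) (coreIter_subset_Icc w κ n) x
    ext x
    simp only [coreIter, Set.mem_setOf_eq, hdeg]
    simp only [ih, Set.mem_inter_iff, Set.mem_preimage]
    constructor
    · rintro ⟨⟨h1, h2⟩, h3⟩
      exact ⟨⟨h1, h3⟩, h2⟩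
    · rintro ⟨⟨h1, h2⟩, h3⟩
      exact ⟨⟨h1, h3⟩, h2⟩

lemma core_comp (hw : Graphon w) (hσ : MPMap σ) :
    core (fun x y => w (σ x) (σ y)) κ = σ ⁻¹' (core w κ) ∩ Set.Icc 0 1 := by
  unfold core
  simp only [coreIter_comp hw hσ, Set.preimage_iInter]
  ext x
  simp only [Set.mem_iInter, Set.mem_inter_iff]
  exact ⟨fun h => ⟨fun n => (h n).1, (h 0).2⟩, fun h n => ⟨h.1 n, h.2⟩⟩

lemma vol_core_comp (hw : Graphon w) (hσ : MPMap σ) :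
    volume (core (fun x y => w (σ x) (σ y)) κ) = volume (core w κ) := by
  rw [core_comp hw hσ]
  exact hσ.2.2 _ (core_measurable hw) (core_subset_Icc w κ)

lemma degen_comp (hw : Graphon w) (hσ : MPMap σ) :
    degen (fun x y => w (σ x) (σ y)) = degen w := by
  unfold degen
  congr 1
  ext κ
  simp only [Set.mem_setOf_eq, vol_core_comp hw hσ]

end Invariance

theorem stmt15 (w w' : ℝ → ℝ → ℝ) (hw : Graphon w) (hw' : Graphon w') :
    |degen w - degen w'| ≤ 2 * Real.sqrt (cutMetric w w') := by
  have hid : MPMap (id : ℝ → ℝ) :=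
    ⟨measurable_id, fun x hx => hx, fun A hA hAI => by
      simp only [Set.preimage_id, Set.inter_eq_self_of_subset_left hAI]⟩
  have hne : {r | ∃ σ : ℝ → ℝ, MPMap σ ∧
      r = cutDist (fun x y => w (σ x) (σ y)) w'}.Nonempty :=
    ⟨_, id, hid, rfl⟩
  set D := |degen w - degen w'| with hDdef
  have hD0 : 0 ≤ D := abs_nonneg _
  have hkey : ∀ r ∈ {r | ∃ σ : ℝ → ℝ, MPMap σ ∧
      r = cutDist (fun x y => w (σ x) (σ y)) w'}, (D/2)^2 ≤ r := by
    rintro r ⟨σ, hσ, rfl⟩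
    have hu : Graphon (fun x y => w (σ x) (σ y)) := graphon_comp hw hσ
    have hde : degen (fun x y => w (σ x) (σ y)) = degen w := degen_comp hw hσ
    have hd0 : 0 ≤ cutDist (fun x y => w (σ x) (σ y)) w' := cutDist_nonneg hu hw'
    have h1 := degen_sub_le hu hw'
    have h2 := degen_sub_le hw' hu
    rw [cutDist_symm w' (fun x y => w (σ x) (σ y))] at h2
    rw [hde] at h1 h2
    have habs : D ≤ 2 * Real.sqrt (cutDist (fun x y => w (σ x) (σ y)) w') := by
      rw [hDdef, abs_sub_le_iff]
      constructor <;> linarith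
    nlinarith [Real.sq_sqrt hd0, Real.sqrt_nonneg (cutDist (fun x y => w (σ x) (σ y)) w')]
  have hinf : (D/2)^2 ≤ cutMetric w w' := le_csInf hne hkey
  have hsq : D/2 ≤ Real.sqrt (cutMetric w w') := by
    have := Real.sqrt_le_sqrt hinf
    rwa [Real.sqrt_sq (by positivity)] at this
  linarith
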